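/- Let T be a finite tree, let f be a locating k-coloring of T, let x be a vertex of maximum degree in T, and let p be the number of distinct colors appearing on the neighbors of x. Then Δ(T) ≤ p·2^(p-1)·3^(k-1-p), where Δ(T) denotes the maximum degree of T. -/

import Mathlib

/-- A proper `k`-coloring of `G`: a function onto the `k` colors such that
adjacent vertices receive different colors. -/
def IsProperColoring {V : Type*} (G : SimpleGraph V) (k : ℕ) (f : V → Fin k) : Prop :=
  Function.Surjective f ∧ ∀ u v : V, G.Adj u v → f u ≠ f v

/-- The color code of a vertex `v`: its `i`-th coordinate is the distance from `v`
to the color class `f⁻¹(i)`. -/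
noncomputable def colorCode {V : Type*} (G : SimpleGraph V) {k : ℕ} (f : V → Fin k)
    (v : V) : Fin k → ℕ :=
  fun i => sInf {n : ℕ | ∃ u : V, f u = i ∧ G.dist v u = n}

/-- A locating `k`-coloring: a proper `k`-coloring in which distinct vertices have
distinct color codes. -/
def IsLocatingColoring {V : Type*} (G : SimpleGraph V) (k : ℕ) (f : V → Fin k) : Prop :=
  IsProperColoring G k f ∧ Function.Injective (colorCode G f)

/-- The locating chromatic number: the least `k` admitting a locating `k`-coloring. -/
noncomputable def locatingChromaticNumber {V : Type*} (G : SimpleGraph V) : ℕ :=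
  sInf {k : ℕ | ∃ f : V → Fin k, IsLocatingColoring G k f}

/-!
Every neighbor `u` of `x` is at distance one from `x`, so each coordinate of its color code is
pinned down up to a few values: it is `0` at its own color, `1` or `2` at the other colors
seen around `x`, `1` at the color of `x`, and within one of the code of `x` at every other
color. The codes of the neighbors of a given color thus lie in a box with
`2 ^ (p - 1) * 3 ^ (k - 1 - p)` points, and since codes are distinct, summing over the `p`
colors around `x` bounds `deg x`.
-/

open Finset

section ColorCode

variable {V : Type*} (G : SimpleGraph V) {k : ℕ} (f : V → Fin k)

lemma colorCode_le_dist (v u : V) : colorCode G f v (f u) ≤ G.dist v u :=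
  Nat.sInf_le ⟨u, rfl, rfl⟩

lemma colorCode_self (v : V) : colorCode G f v (f v) = 0 := by
  simpa using colorCode_le_dist G f v v

variable {G f}

lemma exists_dist_eq_colorCode (hf : Function.Surjective f) (v : V) (i : Fin k) :
    ∃ u, f u = i ∧ G.dist v u = colorCode G f v i := by
  obtain ⟨u, hu⟩ := hf i
  have : {n | ∃ u, f u = i ∧ G.dist v u = n}.Nonempty := ⟨G.dist v u, u, hu, rfl⟩
  exact Nat.sInf_mem this

lemma colorCode_pos (hG : G.Connected) (hf : Function.Surjective f) {v : V} {i : Fin k}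
    (hvi : f v ≠ i) : 0 < colorCode G f v i := by
  obtain ⟨u, rfl, hu⟩ := exists_dist_eq_colorCode hf v i
  rw [← hu, Nat.pos_iff_ne_zero, ne_eq, hG.dist_eq_zero_iff]
  rintro rfl
  exact hvi rfl

lemma colorCode_le_succ_of_adj (hG : G.Connected) (hf : Function.Surjective f) {v w : V}
    (hvw : G.Adj v w) (i : Fin k) : colorCode G f v i ≤ colorCode G f w i + 1 := by
  obtain ⟨u, rfl, hu⟩ := exists_dist_eq_colorCode hf w i
  calc colorCode G f v (f u) ≤ G.dist v u := colorCode_le_dist G f v u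
    _ ≤ G.dist v w + G.dist w u := hG.dist_triangle
    _ = colorCode G f w (f u) + 1 := by
      rw [hu, SimpleGraph.dist_eq_one_iff_adj.mpr hvw, add_comm]

end ColorCode

section NeighborCodes

variable {k : ℕ}

/-- The range of the color code of a neighbor of color `c` of a vertex `x`, when `r` is the color
code of `x`, `C` the set of colors around `x` and `a` the color of `x`. -/
def neighborCodeBox (r : Fin k → ℕ) (C : Finset (Fin k)) (c a : Fin k) (i : Fin k) :
    Finset ℕ :=
  if i = c then {0} else if i ∈ C then Icc 1 2 else if i = a then {1}
  else Icc (r i - 1) (r i + 1)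

lemma prod_card_neighborCodeBox_le (r : Fin k → ℕ) {C : Finset (Fin k)} {c a : Fin k}
    (hc : c ∈ C) (ha : a ∉ C) :
    ∏ i, (neighborCodeBox r C c a i).card ≤ 2 ^ (#C - 1) * 3 ^ (k - 1 - #C) := by
  have hac : a ≠ c := by rintro rfl; exact ha hc
  have hbox_a : (neighborCodeBox r C c a a).card = 1 := by
    simp [neighborCodeBox, hac, ha]
  have hbox_c : (neighborCodeBox r C c a c).card = 1 := by simp [neighborCodeBox]
  have hC : ∏ i ∈ C.erase c, (neighborCodeBox r C c a i).card ≤ 2 ^ (#C - 1) := by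
    rw [← card_erase_of_mem hc]
    refine prod_le_pow_card _ _ _ fun i hi => ?_
    simp [neighborCodeBox, (mem_erase.mp hi).1, (mem_erase.mp hi).2]
  have hrest :
      ∏ i ∈ (insert a C)ᶜ, (neighborCodeBox r C c a i).card ≤ 3 ^ (k - 1 - #C) := by
    have : #(insert a C)ᶜ = k - 1 - #C := by
      rw [card_compl, card_insert_of_notMem ha, Fintype.card_fin]
      omega
    rw [← this]
    refine prod_le_pow_card _ _ _ fun i hi => ?_
    simp only [mem_compl, mem_insert, not_or] at hi
    simp only [neighborCodeBox, if_neg hi.1, if_neg hi.2,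
      if_neg (ne_of_mem_of_not_mem hc hi.2).symm, Nat.card_Icc]
    omega
  rw [← prod_mul_prod_compl (insert a C), prod_insert ha, ← mul_prod_erase C _ hc, hbox_a,
    hbox_c, one_mul, one_mul]
  exact Nat.mul_le_mul hC hrest

variable {V : Type*} {G : SimpleGraph V} {f : V → Fin k}

def neighborColors (G : SimpleGraph V) (f : V → Fin k) (x : V) [Fintype (G.neighborSet x)] :
    Finset (Fin k) :=
  (G.neighborFinset x).image f

lemma colorCode_mem_neighborCodeBox (hG : G.Connected) (hf : IsProperColoring G k f)
    {x u : V} [Fintype (G.neighborSet x)] (hxu : G.Adj x u) :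
    colorCode G f u ∈
      Fintype.piFinset (neighborCodeBox (colorCode G f x) (neighborColors G f x) (f u) (f x)) := by
  obtain ⟨hsurj, hproper⟩ := hf
  have hux : G.Adj u x := hxu.symm
  rw [Fintype.mem_piFinset]
  intro i
  unfold neighborCodeBox
  split_ifs with hc hC ha
  · rw [hc, colorCode_self, mem_singleton]
  · obtain ⟨w, hw, rfl⟩ := mem_image.mp hC
    have hxw : G.Adj x w := (G.mem_neighborFinset x w).mp hw
    have := (colorCode_le_dist G f x w).trans (SimpleGraph.dist_eq_one_iff_adj.mpr hxw).le
    have := colorCode_pos hG hsurj (Ne.symm hc)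
    have := colorCode_le_succ_of_adj hG hsurj hux (f w)
    rw [mem_Icc]
    omega
  · subst ha
    have := colorCode_pos hG hsurj (hproper x u hxu).symm
    have := (colorCode_le_dist G f u x).trans (SimpleGraph.dist_eq_one_iff_adj.mpr hux).le
    rw [mem_singleton]
    omega
  · have := colorCode_le_succ_of_adj hG hsurj hux i
    have := colorCode_le_succ_of_adj hG hsurj hxu i
    rw [mem_Icc]
    omega

lemma card_neighbors_of_color_le (hG : G.Connected) (hf : IsLocatingColoring G k f) (x : V)
    [Fintype (G.neighborSet x)] {c : Fin k} (hc : c ∈ neighborColors G f x) :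
    #{u ∈ G.neighborFinset x | f u = c} ≤
      2 ^ (#(neighborColors G f x) - 1) * 3 ^ (k - 1 - #(neighborColors G f x)) := by
  have hfx : f x ∉ neighborColors G f x := by
    simp only [neighborColors, mem_image, SimpleGraph.mem_neighborFinset, not_exists, not_and]
    exact fun u hxu hu => hf.1.2 x u hxu hu.symm
  refine le_trans ?_ (prod_card_neighborCodeBox_le (colorCode G f x) hc hfx)
  rw [← Fintype.card_piFinset]
  refine card_le_card_of_injOn (colorCode G f) (fun u hu => ?_) hf.2.injOn
  obtain ⟨hxu, rfl⟩ := mem_filter.mp hu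
  exact colorCode_mem_neighborCodeBox hG hf.1 ((G.mem_neighborFinset x u).mp hxu)

lemma degree_le_of_isLocatingColoring (hG : G.Connected) (hf : IsLocatingColoring G k f) (x : V)
    [Fintype (G.neighborSet x)] :
    G.degree x ≤ #(neighborColors G f x) * 2 ^ (#(neighborColors G f x) - 1) *
      3 ^ (k - 1 - #(neighborColors G f x)) := by
  rw [← G.card_neighborFinset_eq_degree, card_eq_sum_card_image f, mul_assoc, ← smul_eq_mul,
    ← sum_const]
  exact sum_le_sum fun c hc => card_neighbors_of_color_le hG hf x hc

end NeighborCodes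

theorem maxDegree_le_of_locatingColoring_general {V : Type*} [Fintype V]
    (G : SimpleGraph V) [DecidableRel G.Adj] (hT : G.IsTree) (k : ℕ) (f : V → Fin k)
    (hf : IsLocatingColoring G k f) (x : V) (hx : G.degree x = G.maxDegree)
    (p : ℕ) (hp : p = ((G.neighborFinset x).image f).card) :
    G.maxDegree ≤ p * 2 ^ (p - 1) * 3 ^ (k - 1 - p) := by
  rw [← hx, hp]
  exact degree_le_of_isLocatingColoring hT.connected hf x

/-- In a finite tree with a locating `k`-coloring, if `x` is a vertex of maximum degree
and `p` is the number of distinct colors appearing on the neighbors of `x`, then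
`Δ(T) ≤ p * 2^(p-1) * 3^(k-1-p)`. -/
theorem maxDegree_le_of_locatingColoring {V : Type*} [Fintype V] [DecidableEq V]
    (G : SimpleGraph V) [DecidableRel G.Adj] (hT : G.IsTree) (k : ℕ) (f : V → Fin k)
    (hf : IsLocatingColoring G k f) (x : V) (hx : G.degree x = G.maxDegree)
    (p : ℕ) (hp : p = ((G.neighborFinset x).image f).card) :
    G.maxDegree ≤ p * 2 ^ (p - 1) * 3 ^ (k - 1 - p) :=
  maxDegree_le_of_locatingColoring_general G hT k f hf x hx p hp
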